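/- For every positive integer m and every complex number s, the Gauss–Legendre multiplication formula holds: Γ(s) = m^{s−1/2} · (2π)^{(1−m)/2} · ∏_{k=0}^{m−1} Γ((s+k)/m). -/

import Mathlib

/-!
Euler's finite products `GammaSeq s n = n^s n! / ∏_{j ≤ n} (s + j)` make the multiplication
formula algebraic: with `N + 1 = m (n + 1)`, the denominators `∏_{j ≤ n} ((s + k)/m + j)` for
`k < m` reassemble into `m^{-(N+1)} ∏_{i ≤ N} (s + i)`, the denominator of `GammaSeq s N`.
Comparing with `s = 1` cancels everything except `(N / n)^{s - 1} → m^{s - 1}`, so in the limit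
`m^{s-1} ∏ₖ Γ((s + k)/m) = Γ(s) ∏ₖ Γ((1 + k)/m)`. The constant comes from the reflection
formula, pairing `k + 1` with `m - 1 - k`, and from `∏_{k=1}^{m-1} 2 sin(πk/m) = m`, the norm
of `∏ (1 - ζ^k) = m` for a primitive `m`-th root of unity `ζ`.
-/

open Finset Filter Topology Real
open scoped Nat

theorem Finset.prod_range_mul_eq_prod_prod {M : Type*} [CommMonoid M] (f : ℕ → M) (m N : ℕ) :
    ∏ i ∈ range (m * N), f i = ∏ k ∈ range m, ∏ j ∈ range N, f (k + m * j) := by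
  induction N with
  | zero => simp
  | succ N ih =>
    rw [Nat.mul_succ, prod_range_add, ih]
    simp only [prod_range_succ, prod_mul_distrib, add_comm (m * N)]

theorem Finset.sum_range_add_div {K : Type*} [Field K] [CharZero K] {m : ℕ} (hm : m ≠ 0)
    (s : K) :
    ∑ k ∈ range m, (s + k) / m = s + (m - 1) / 2 := by
  have hsum : (∑ k ∈ range m, (k : K)) * 2 = m * (m - 1) := by
    have h := congrArg (Nat.cast : ℕ → K) (sum_range_id_mul_two m)
    push_cast [Nat.cast_sub (Nat.one_le_iff_ne_zero.mpr hm)] at h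
    exact h
  rw [← sum_div, sum_add_distrib, sum_const, card_range, nsmul_eq_mul]
  field_simp
  linear_combination hsum

theorem Finset.prod_prod_add_div_add {K : Type*} [Field K] [CharZero K] {m : ℕ} (hm : m ≠ 0)
    (s : K) (N : ℕ) :
    ∏ k ∈ range m, ∏ j ∈ range N, ((s + k) / m + j) =
      (∏ i ∈ range (m * N), (s + i)) / (m : K) ^ (m * N) := by
  have hterm : ∀ k j : ℕ, (s + k) / m + j = (s + ((k + m * j : ℕ) : K)) / m := by
    intro k j
    push_cast
    field_simp
    ring
  simp only [hterm, prod_div_distrib, prod_const, card_range, ← pow_mul',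
    prod_range_mul_eq_prod_prod]

namespace Real

theorem prod_two_mul_sin_pi_mul_succ_div (n : ℕ) :
    ∏ k ∈ range n, 2 * sin (π * (k + 1) / (n + 1)) = n + 1 := by
  have hζ := Complex.isPrimitiveRoot_exp (n + 1) n.succ_ne_zero
  have h := congrArg (‖·‖) hζ.prod_one_sub_pow_eq_order
  rw [norm_prod] at h
  have hfactor : ∀ k ∈ range n,
      ‖1 - Complex.exp (2 * π * Complex.I / ((n + 1 : ℕ) : ℂ)) ^ (k + 1)‖ =
        2 * sin (π * (k + 1) / (n + 1)) := by
    intro k hk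
    have hkn : (k : ℝ) + 1 < n + 1 := by exact_mod_cast Nat.succ_lt_succ (mem_range.mp hk)
    have hsin : 0 < sin (π * (k + 1) / (n + 1)) := by
      apply sin_pos_of_pos_of_lt_pi (by positivity)
      rw [div_lt_iff₀ (by positivity)]
      nlinarith [pi_pos]
    rw [← Complex.exp_nat_mul, norm_sub_rev,
      show ((k + 1 : ℕ) : ℂ) * (2 * π * Complex.I / ((n + 1 : ℕ) : ℂ)) =
        Complex.I * ((2 * π * (k + 1) / (n + 1) : ℝ) : ℂ) by push_cast; ring,
      Complex.norm_exp_I_mul_ofReal_sub_one, Real.norm_eq_abs,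
      show 2 * π * (k + 1) / (n + 1) / 2 = π * (k + 1) / (n + 1) by ring, abs_of_pos (mul_pos two_pos hsin)]
  rw [prod_congr rfl hfactor] at h
  exact_mod_cast h

theorem sq_prod_Gamma_succ_div_succ (n : ℕ) :
    (∏ k ∈ range n, Gamma ((k + 1) / (n + 1))) ^ 2 = (2 * π) ^ n / (n + 1) := by
  have hsin : ∏ k ∈ range n, sin (π * ((k + 1) / (n + 1))) = (n + 1) / 2 ^ n := by
    have h := prod_two_mul_sin_pi_mul_succ_div n
    rw [prod_mul_distrib, prod_const, card_range] at h
    simp only [mul_div_assoc] at h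
    rw [eq_div_iff (by positivity), mul_comm, h]
  calc (∏ k ∈ range n, Gamma ((k + 1) / (n + 1))) ^ 2
      = ∏ k ∈ range n, Gamma ((k + 1) / (n + 1)) * Gamma (1 - (k + 1) / (n + 1)) := by
        rw [sq]
        nth_rewrite 2 [← prod_range_reflect]
        rw [← prod_mul_distrib]
        refine prod_congr rfl fun k hk => ?_
        have hk := mem_range.mp hk
        rw [show ((n - 1 - k : ℕ) : ℝ) = n - 1 - k by
          rw [Nat.sub_sub, Nat.cast_sub (by omega)]; push_cast; ring]
        congr 2
        field_simp
        ring
    _ = ∏ k ∈ range n, π / sin (π * ((k + 1) / (n + 1))) :=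
        prod_congr rfl fun k _ => Gamma_mul_Gamma_one_sub _
    _ = (2 * π) ^ n / (n + 1) := by
        rw [prod_div_distrib, prod_const, card_range, hsin]
        field_simp
        ring

theorem prod_Gamma_succ_div {m : ℕ} (hm : m ≠ 0) :
    ∏ k ∈ range m, Gamma ((k + 1) / m) =
      (2 * π) ^ (((m : ℝ) - 1) / 2) * (m : ℝ) ^ (-(1 / 2) : ℝ) := by
  obtain ⟨n, rfl⟩ := Nat.exists_eq_succ_of_ne_zero hm
  have hpos : 0 < ∏ k ∈ range n, Gamma ((k + 1) / (n + 1)) :=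
    prod_pos fun k _ => Gamma_pos_of_pos (by positivity)
  rw [prod_range_succ, Nat.cast_succ, div_self (by positivity), Gamma_one, mul_one]
  refine (sq_eq_sq₀ hpos.le (by positivity)).mp ?_
  rw [sq_prod_Gamma_succ_div_succ, mul_pow ((2 * π) ^ _), ← rpow_mul_natCast (by positivity),
    ← rpow_mul_natCast (by positivity)]
  push_cast
  rw [show ((n:ℝ) + 1 - 1) / 2 * 2 = n by ring, rpow_natCast, show -(1/2 : ℝ) * 2 = -1 by ring,
    rpow_neg_one, div_eq_mul_inv]

end Real

namespace Complex

theorem prod_natCast_cpow_add_div {m : ℕ} (hm : m ≠ 0) {n : ℕ} (hn : n ≠ 0) (s : ℂ) :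
    ∏ k ∈ range m, (n : ℂ) ^ ((s + k) / m) = (n : ℂ) ^ (s + ((m : ℂ) - 1) / 2) := by
  have hn' : (n : ℂ) ≠ 0 := Nat.cast_ne_zero.mpr hn
  simp only [cpow_def_of_ne_zero hn', ← exp_sum, ← mul_sum, sum_range_add_div hm]

theorem prod_GammaSeq_add_div {m : ℕ} (hm : m ≠ 0) {n : ℕ} (hn : n ≠ 0) (s : ℂ) :
    ∏ k ∈ range m, GammaSeq ((s + k) / m) n =
      (n : ℂ) ^ (s + ((m : ℂ) - 1) / 2) * (n ! : ℂ) ^ m * (m : ℂ) ^ (m * (n + 1)) /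
        ∏ i ∈ range (m * (n + 1)), (s + i) := by
  simp only [GammaSeq, prod_div_distrib, prod_mul_distrib, prod_const, card_range,
    prod_natCast_cpow_add_div hm hn, prod_prod_add_div_add hm]
  rw [div_div_eq_mul_div]

theorem prod_GammaSeq_add_div_mul_GammaSeq_one {m : ℕ} (hm : m ≠ 0) {n : ℕ} (hn : n ≠ 0)
    {N : ℕ} (hN : N + 1 = m * (n + 1)) (s : ℂ) :
    (∏ k ∈ range m, GammaSeq ((s + k) / m) n) * GammaSeq 1 N * (N : ℂ) ^ (s - 1) =
      (∏ k ∈ range m, GammaSeq ((1 + k) / m) n) * GammaSeq s N * (n : ℂ) ^ (s - 1) := by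
  have hn' : (n : ℂ) ≠ 0 := Nat.cast_ne_zero.mpr hn
  have hN' : (N : ℂ) ≠ 0 := by
    have : n + 1 ≤ m * (n + 1) := Nat.le_mul_of_pos_left _ (Nat.pos_of_ne_zero hm)
    exact Nat.cast_ne_zero.mpr (by omega)
  have hNs : (N : ℂ) ^ s = (N : ℂ) ^ (s - 1) * N := by
    conv_lhs => rw [← sub_add_cancel s 1, cpow_add _ _ hN', cpow_one]
  have hns : (n : ℂ) ^ (s + ((m : ℂ) - 1) / 2) =
      (n : ℂ) ^ (s - 1) * (n : ℂ) ^ (1 + ((m : ℂ) - 1) / 2) := by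
    rw [← cpow_add _ _ hn']
    ring_nf
  rw [prod_GammaSeq_add_div hm hn, prod_GammaSeq_add_div hm hn]
  simp only [GammaSeq, hN, cpow_one, hNs, hns]
  ring

theorem tendsto_natCast_cpow_div_natCast_cpow {u : ℕ → ℕ} {c : ℝ} (hc : 0 < c)
    (hu : Tendsto (fun n => (u n : ℝ) / n) atTop (𝓝 c)) (z : ℂ) :
    Tendsto (fun n => (u n : ℂ) ^ z / (n : ℂ) ^ z) atTop (𝓝 ((c : ℂ) ^ z)) := by
  have h := (continuousAt_cpow_const (b := z) (ofReal_mem_slitPlane.mpr hc)).tendsto.comp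
    ((continuous_ofReal.tendsto c).comp hu)
  refine h.congr fun n => ?_
  simpa only [Function.comp_apply, ofReal_div, ofReal_natCast] using
    div_cpow_ofReal_nonneg (Nat.cast_nonneg (u n)) (Nat.cast_nonneg n) z

theorem prod_Gamma_add_div_mul_cpow {m : ℕ} (hm : m ≠ 0) (s : ℂ) :
    (∏ k ∈ range m, Gamma ((s + k) / m)) * (m : ℂ) ^ (s - 1) =
      (∏ k ∈ range m, Gamma ((1 + k) / m)) * Gamma s := by
  set N : ℕ → ℕ := fun n => m * (n + 1) - 1
  have hN : ∀ n, N n + 1 = m * (n + 1) := fun n =>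
    Nat.sub_add_cancel (Nat.one_le_iff_ne_zero.mpr (mul_ne_zero hm n.succ_ne_zero))
  have hNtend : Tendsto N atTop atTop := by
    refine tendsto_atTop_mono (fun n => ?_) tendsto_id
    have := hN n
    have : n + 1 ≤ m * (n + 1) := Nat.le_mul_of_pos_left _ (Nat.pos_of_ne_zero hm)
    simp only [id]
    omega
  have hNdiv : Tendsto (fun n => (N n : ℝ) / n) atTop (𝓝 m) := by
    have h := tendsto_const_nhds (x := (m : ℝ)).add
      (tendsto_const_div_atTop_nhds_zero_nat ((m : ℝ) - 1))
    rw [add_zero] at h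
    refine h.congr' ?_
    filter_upwards [eventually_ne_atTop 0] with n hn
    have hcast : (N n : ℝ) = m * (n + 1) - 1 := by
      rw [eq_sub_iff_add_eq]
      exact_mod_cast hN n
    rw [hcast]
    field_simp
    ring
  have hprod : ∀ t : ℂ, Tendsto (fun n => ∏ k ∈ range m, GammaSeq ((t + k) / m) n) atTop
      (𝓝 (∏ k ∈ range m, Gamma ((t + k) / m))) := fun t =>
    tendsto_finsetProd _ fun k _ => GammaSeq_tendsto_Gamma _
  have hseq : ∀ t : ℂ, Tendsto (fun n => GammaSeq t (N n)) atTop (𝓝 (Gamma t)) := fun t =>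
    (GammaSeq_tendsto_Gamma t).comp hNtend
  have hlhs := ((hprod s).mul (hseq 1)).mul
    (tendsto_natCast_cpow_div_natCast_cpow (Nat.cast_pos.mpr (Nat.pos_of_ne_zero hm)) hNdiv (s - 1))
  rw [Gamma_one, mul_one, ofReal_natCast] at hlhs
  refine tendsto_nhds_unique_of_eventuallyEq hlhs ((hprod 1).mul (hseq s)) ?_
  filter_upwards [eventually_ne_atTop 0] with n hn
  have hn' : (n : ℂ) ^ (s - 1) ≠ 0 := by simp [hn]
  rw [mul_div_assoc', div_eq_iff hn', prod_GammaSeq_add_div_mul_GammaSeq_one hm hn (hN n)]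

theorem prod_Gamma_one_add_div {m : ℕ} (hm : m ≠ 0) :
    ∏ k ∈ range m, Gamma ((1 + k) / m) =
      (2 * π : ℂ) ^ (((m : ℂ) - 1) / 2) * (m : ℂ) ^ (-(1 / 2) : ℂ) := by
  have h := congrArg ofReal (Real.prod_Gamma_succ_div hm)
  rw [ofReal_prod, ofReal_mul, ofReal_cpow (by positivity), ofReal_cpow (by positivity)] at h
  simp only [← Gamma_ofReal] at h
  push_cast at h
  simpa only [add_comm] using h

end Complex

open Real in
theorem gauss_legendre_multiplication_general (m : ℕ) (hm : 1 ≤ m) (s : ℂ) :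
    Complex.Gamma s =
      (m : ℂ) ^ (s - 1 / 2) * ((2 * (π : ℂ)) ^ ((1 - (m : ℂ)) / 2)) *
        ∏ k ∈ Finset.range m, Complex.Gamma ((s + (k : ℂ)) / (m : ℂ)) := by
  have hm0 : m ≠ 0 := Nat.one_le_iff_ne_zero.mp hm
  have hmc : (m : ℂ) ≠ 0 := Nat.cast_ne_zero.mpr hm0
  have h2π : 2 * (π : ℂ) ≠ 0 := by simp [pi_ne_zero]
  have key := Complex.prod_Gamma_add_div_mul_cpow hm0 s
  rw [Complex.prod_Gamma_one_add_div hm0] at key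
  have h2π_inv :
      (2 * (π : ℂ)) ^ ((1 - (m : ℂ)) / 2) * (2 * (π : ℂ)) ^ (((m : ℂ) - 1) / 2) = 1 := by
    rw [← Complex.cpow_add _ _ h2π, ← add_div, sub_add_sub_cancel', sub_self, zero_div,
      Complex.cpow_zero]
  have hm_inv : (m : ℂ) ^ (1 / 2 : ℂ) * (m : ℂ) ^ (-(1 / 2) : ℂ) = 1 := by
    rw [← Complex.cpow_add _ _ hmc, add_neg_cancel, Complex.cpow_zero]
  have hm_split : (m : ℂ) ^ (s - 1 / 2) = (m : ℂ) ^ (s - 1) * (m : ℂ) ^ (1 / 2 : ℂ) := by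
    rw [← Complex.cpow_add _ _ hmc]
    ring_nf
  set P := ∏ k ∈ Finset.range m, Complex.Gamma ((s + (k : ℂ)) / (m : ℂ))
  linear_combination (-(2 * (π : ℂ)) ^ ((1 - (m : ℂ)) / 2) * P) * hm_split
    - (m : ℂ) ^ (1 / 2 : ℂ) * (2 * (π : ℂ)) ^ ((1 - (m : ℂ)) / 2) * key
    - (m : ℂ) ^ (1 / 2 : ℂ) * (m : ℂ) ^ (-(1 / 2) : ℂ) * Complex.Gamma s * h2π_inv
    - Complex.Gamma s * hm_inv

open Real in
theorem gauss_legendre_multiplication (m : ℕ) (hm : 1 ≤ m) (s : ℂ)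
    (hs : ∀ n : ℕ, s ≠ -(n : ℂ)) :
    Complex.Gamma s =
      (m : ℂ) ^ (s - 1 / 2) * ((2 * (π : ℂ)) ^ ((1 - (m : ℂ)) / 2)) *
        ∏ k ∈ Finset.range m, Complex.Gamma ((s + (k : ℂ)) / (m : ℂ)) :=
  gauss_legendre_multiplication_general m hm s
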